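/- arXiv:1903.03821 — 2 statements merged into one kernel-verified Lean document; each statement's English description precedes it below -/
import Mathlib

section
/- For any connected simple graph G = (V, E), the inequality χ(G)(χ(G)−1)/2 + |V| − χ(G) ≤ |E| holds, where χ(G) is the chromatic number of G. -/
/-!
Induction on the number of vertices. A finite connected graph with at least two vertices has a
vertex `v` whose removal leaves it connected. Deleting `v` removes `deg v ≥ 1` edges and lowers
`χ` by at most one. If `χ` drops, then `deg v ≥ χ(G - v)`: otherwise some colour of an optimal
colouring of `G - v` is missing around `v`, and `v` can take it. Since
`C(k + 1, 2) = C(k, 2) + k`, in both cases the bound for `G - v` yields the bound for `G`.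
-/

open SimpleGraph

noncomputable def chi {V : Type*} (G : SimpleGraph V) : ℕ := G.chromaticNumber.toNat

open Finset

namespace SimpleGraph

variable {V α : Type*} {G : SimpleGraph V} {v : V} {n : ℕ}

lemma Coloring.nonempty_of_induce_compl_singleton (C : (G.induce {v}ᶜ).Coloring α) (c : α)
    (hc : ∀ w (hw : w ≠ v), G.Adj v w → C ⟨w, hw⟩ ≠ c) : Nonempty (G.Coloring α) := by
  classical
  refine ⟨Coloring.mk (fun w ↦ if h : w = v then c else C ⟨w, h⟩) fun {a b} hab ↦ ?_⟩
  by_cases ha : a = v <;> by_cases hb : b = v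
  · exact absurd (ha.trans hb.symm) hab.ne
  · subst ha; simpa [hb] using (hc b hb hab).symm
  · subst hb; simpa [ha] using hc a ha hab.symm
  · simpa [ha, hb] using C.valid (show (G.induce {v}ᶜ).Adj ⟨a, ha⟩ ⟨b, hb⟩ from hab)

lemma Colorable.succ_of_induce_compl_singleton (h : (G.induce {v}ᶜ).Colorable n) :
    G.Colorable (n + 1) :=
  Coloring.nonempty_of_induce_compl_singleton
    ((Embedding.completeGraph Fin.castSuccEmb).toHom.comp h.some) (Fin.last n)
    fun _ _ _ ↦ (Fin.castSucc_lt_last _).ne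

lemma Colorable.of_induce_compl_singleton_of_degree_lt [Fintype (G.neighborSet v)]
    (h : (G.induce {v}ᶜ).Colorable n) (hdeg : G.degree v < n) : G.Colorable n := by
  classical
  obtain ⟨C⟩ := h
  let f : G.neighborSet v → Fin n := fun w ↦ C ⟨w, (G.ne_of_adj w.2).symm⟩
  obtain ⟨c, -, hc⟩ := exists_mem_notMem_of_card_lt_card (s := univ.image f) (t := univ) <|
    calc #(univ.image f) ≤ #(univ : Finset (G.neighborSet v)) := card_image_le
      _ = G.degree v := card_neighborSet_eq_degree ..
      _ < #(univ : Finset (Fin n)) := by rwa [card_fin]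
  exact C.nonempty_of_induce_compl_singleton c fun w _ hvw hwc ↦
    hc (mem_image.2 ⟨⟨w, hvw⟩, mem_univ _, hwc⟩)

lemma chromaticNumber_eq_chi [Finite V] : G.chromaticNumber = chi G := by
  have := Fintype.ofFinite V
  exact (ENat.natCast_toNat <|
    chromaticNumber_ne_top_iff_exists.2 ⟨_, G.colorable_of_fintype⟩).symm

lemma colorable_iff_chi_le [Finite V] : G.Colorable n ↔ chi G ≤ n := by
  rw [← chromaticNumber_le_iff_colorable, chromaticNumber_eq_chi, Nat.cast_le]

lemma chi_le_card [Fintype V] : chi G ≤ Fintype.card V :=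
  colorable_iff_chi_le.1 G.colorable_of_fintype

lemma one_le_chi [Finite V] [Nonempty V] : 1 ≤ chi G := by
  by_contra! h
  exact not_isEmpty_of_nonempty V <|
    colorable_zero_iff.1 ((colorable_iff_chi_le (G := G)).2 (by omega))

lemma chi_induce_le [Finite V] (s : Set V) : chi (G.induce s) ≤ chi G :=
  colorable_iff_chi_le.1 ((colorable_iff_chi_le.2 le_rfl).of_hom (Embedding.induce s).toHom)

lemma chi_le_chi_induce_compl_singleton_add_one [Finite V] (v : V) :
    chi G ≤ chi (G.induce {v}ᶜ) + 1 :=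
  colorable_iff_chi_le.1 (colorable_iff_chi_le.2 le_rfl).succ_of_induce_compl_singleton

lemma chi_induce_compl_singleton_le_degree [Finite V] [Fintype (G.neighborSet v)]
    (h : chi (G.induce {v}ᶜ) < chi G) : chi (G.induce {v}ᶜ) ≤ G.degree v := by
  by_contra! hdeg
  exact h.not_ge <| colorable_iff_chi_le.1 <|
    (colorable_iff_chi_le.2 le_rfl).of_induce_compl_singleton_of_degree_lt hdeg

lemma ncard_edgeSet_eq_induce_compl_singleton_add_degree [Fintype V] [DecidableRel G.Adj]
    (v : V) : G.edgeSet.ncard = (G.induce {v}ᶜ).edgeSet.ncard + G.degree v := by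
  classical
  rw [← coe_edgeFinset, ← coe_edgeFinset, Set.ncard_coe_finset, Set.ncard_coe_finset,
    card_edgeFinset_induce_compl_singleton, card_edgeFinset_deleteIncidenceSet,
    Nat.sub_add_cancel (G.degree_le_card_edgeFinset v)]

lemma choose_two_chi_add_le_of_induce_compl_singleton [Fintype V] [DecidableRel G.Adj]
    (hv : 0 < G.degree v)
    (h : (chi (G.induce {v}ᶜ)).choose 2 + (Fintype.card V - 1 - chi (G.induce {v}ᶜ)) ≤
      (G.induce {v}ᶜ).edgeSet.ncard) :
    (chi G).choose 2 + (Fintype.card V - chi G) ≤ G.edgeSet.ncard := by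
  rw [ncard_edgeSet_eq_induce_compl_singleton_add_degree v]
  obtain heq | hlt := (chi_induce_le (G := G) {v}ᶜ).eq_or_lt
  · rw [heq] at h
    omega
  · have hdeg := chi_induce_compl_singleton_le_degree hlt
    have hsucc : chi G = chi (G.induce {v}ᶜ) + 1 :=
      le_antisymm (chi_le_chi_induce_compl_singleton_add_one v) hlt
    simp only [hsucc, Nat.choose_succ_succ', Nat.choose_one_right, Nat.reduceAdd]
    omega

theorem Connected.choose_two_chi_add_card_sub_chi_le [Fintype V] (hG : G.Connected) :
    (chi G).choose 2 + (Fintype.card V - chi G) ≤ G.edgeSet.ncard := by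
  classical
  obtain ⟨n, hn⟩ : ∃ n, Fintype.card V = n := ⟨_, rfl⟩
  induction n generalizing V with
  | zero => exact absurd hn (have := hG.nonempty; Fintype.card_ne_zero)
  | succ n ih =>
    rcases subsingleton_or_nontrivial V with hV | hV
    · have := hG.nonempty
      have hcard : Fintype.card V = 1 :=
        le_antisymm (Fintype.card_le_one_iff_subsingleton.2 hV) Fintype.card_pos
      have hchi : chi G = 1 := le_antisymm (hcard ▸ chi_le_card) one_le_chi
      simp [hchi, hcard]
    · obtain ⟨v, hv⟩ := hG.exists_connected_induce_compl_singleton_of_finite_nontrivial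
      refine choose_two_chi_add_le_of_induce_compl_singleton
        (hG.preconnected.degree_pos_of_nontrivial v) ?_
      have hcard : Fintype.card ({v}ᶜ : Set V) = Fintype.card V - 1 := by
        rw [Fintype.card_compl_set, Set.card_singleton]
      exact hcard ▸ ih hv (by omega)

end SimpleGraph

theorem stmt0 {V : Type*} [Fintype V] (G : SimpleGraph V) (hG : G.Connected) :
    chi G * (chi G - 1) / 2 + Fintype.card V - chi G ≤ G.edgeSet.ncard := by
  have hbound := hG.choose_two_chi_add_card_sub_chi_le
  rw [Nat.choose_two_right] at hbound
  have hchi := chi_le_card (G := G)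
  omega
end

section
/- If G is a finite connected simple graph, v is a vertex of G with G − v connected, and χ(G) = χ(G − v), and G satisfies the equality χ(G)(χ(G)−1)/2 + |V(G)| − χ(G) = |E(G)|, then v has degree 1 in G and G − v also satisfies the equality χ(G−v)(χ(G−v)−1)/2 + |V(G−v)| − χ(G−v) = |E(G−v)|. -/
open SimpleGraph

section Helpers
universe u
variable {V : Type u}

lemma chi_colorable [Fintype V] (G : SimpleGraph V) : G.Colorable (chi G) :=
  G.colorable_chromaticNumber_of_fintype

lemma chi_le {G : SimpleGraph V} {n : ℕ} (h : G.Colorable n) : chi G ≤ n := by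
  have h1 := h.chromaticNumber_le
  unfold chi
  have := ENat.toNat_le_toNat h1 (by simp)
  simpa using this

lemma chi_pos [Fintype V] [Nonempty V] (G : SimpleGraph V) : 1 ≤ chi G := by
  by_contra h
  push_neg at h
  interval_cases h' : chi G
  · have hc := chi_colorable G
    rw [h'] at hc
    obtain ⟨C⟩ := hc
    exact (C (Classical.arbitrary V)).elim0

lemma chi_induce_le [Fintype V] (G : SimpleGraph V) (s : Set V) :
    chi (G.induce s) ≤ chi G := by
  obtain ⟨C⟩ := chi_colorable G
  exact chi_le ⟨⟨fun x => C x.1, fun {a b} hab => C.valid hab⟩⟩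


lemma colorable_succ [DecidableEq V] (G : SimpleGraph V) (v : V) {c : ℕ}
    (h : (G.induce {v}ᶜ).Colorable c) : G.Colorable (c + 1) := by
  obtain ⟨C⟩ := h
  refine ⟨⟨fun w => if hw : w = v then Fin.last c else (C ⟨w, by simp [hw]⟩).castSucc, ?_⟩⟩
  intro a b hab heq
  by_cases ha : a = v <;> by_cases hb : b = v
  · exact hab.ne (ha.trans hb.symm)
  · rw [dif_pos ha, dif_neg hb] at heq
    exact (Fin.castSucc_lt_last _).ne' heq
  · rw [dif_neg ha, dif_pos hb] at heq
    exact (Fin.castSucc_lt_last _).ne heq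
  · rw [dif_neg ha, dif_neg hb] at heq
    have hadj : (G.induce {v}ᶜ).Adj ⟨a, by simp [ha]⟩ ⟨b, by simp [hb]⟩ := hab
    exact C.valid hadj (Fin.castSucc_injective _ heq)

lemma colorable_of_deleteVertex [Fintype V] [DecidableEq V] (G : SimpleGraph V) (v : V) {c : ℕ}
    (h : (G.induce {v}ᶜ).Colorable c) (hdeg : (G.neighborSet v).ncard < c) : G.Colorable c := by
  classical
  obtain ⟨C⟩ := h
  set S : Finset (Fin c) :=
    (G.neighborSet v).toFinset.attach.image
      (fun w => C ⟨w.1, by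
        simpa using ((G.mem_neighborSet v w.1).mp (Set.mem_toFinset.mp w.2)).ne'⟩) with hS
  have hcard : S.card < c := by
    calc S.card ≤ (G.neighborSet v).toFinset.attach.card := Finset.card_image_le
    _ = (G.neighborSet v).ncard := by
        rw [Finset.card_attach, Set.ncard_eq_toFinset_card']
    _ < c := hdeg
  have hex : ∃ c0 : Fin c, c0 ∉ S := by
    by_contra hcon
    push_neg at hcon
    have hsub : (Finset.univ : Finset (Fin c)) ⊆ S := fun x _ => hcon x
    have := Finset.card_le_card hsub
    simp only [Finset.card_univ, Fintype.card_fin] at this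
    omega
  obtain ⟨c0, hc0⟩ := hex
  refine ⟨⟨fun w => if hw : w = v then c0 else C ⟨w, by simp [hw]⟩, ?_⟩⟩
  intro a b hab heq
  by_cases ha : a = v <;> by_cases hb : b = v
  · exact hab.ne (ha.trans hb.symm)
  · rw [dif_pos ha, dif_neg hb] at heq
    have hvb : G.Adj v b := ha ▸ hab
    refine hc0 ?_
    rw [heq, hS]
    exact Finset.mem_image.mpr
      ⟨⟨b, Set.mem_toFinset.mpr hvb⟩, Finset.mem_attach _ _, rfl⟩
  · rw [dif_neg ha, dif_pos hb] at heq
    have hva : G.Adj v a := (hb ▸ hab).symm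
    refine hc0 ?_
    rw [← heq, hS]
    exact Finset.mem_image.mpr
      ⟨⟨a, Set.mem_toFinset.mpr hva⟩, Finset.mem_attach _ _, rfl⟩
  · rw [dif_neg ha, dif_neg hb] at heq
    have hadj : (G.induce {v}ᶜ).Adj ⟨a, by simp [ha]⟩ ⟨b, by simp [hb]⟩ := hab
    exact C.valid hadj heq


lemma edge_count [Fintype V] [DecidableEq V] (G : SimpleGraph V) (v : V) :
    G.edgeSet.ncard = (G.induce {v}ᶜ).edgeSet.ncard + (G.neighborSet v).ncard := by
  classical
  have hinj : Function.Injective (Sym2.map (Subtype.val : ({v}ᶜ : Set V) → V)) :=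
    Sym2.map.injective Subtype.val_injective
  have himg : (Sym2.map (Subtype.val : ({v}ᶜ : Set V) → V)) '' (G.induce {v}ᶜ).edgeSet
      = {e ∈ G.edgeSet | v ∉ e} := by
    ext e
    constructor
    · rintro ⟨e', he', rfl⟩
      induction e' using Sym2.ind with
      | _ a b =>
        rw [SimpleGraph.mem_edgeSet] at he'
        have hadj : G.Adj ↑a ↑b := he'
        refine ⟨hadj, ?_⟩
        rw [Sym2.map_pair_eq, Sym2.mem_iff]
        rintro (h | h)
        · exact a.2 (by simp [h.symm])
        · exact b.2 (by simp [h.symm])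
    · intro he
      induction e using Sym2.ind with
      | _ a b =>
        obtain ⟨he, hv⟩ := he
        rw [Sym2.mem_iff] at hv
        push_neg at hv
        refine ⟨s(⟨a, by simp [Ne.symm hv.1]⟩, ⟨b, by simp [Ne.symm hv.2]⟩), ?_, ?_⟩
        · rw [SimpleGraph.mem_edgeSet]
          exact he
        · rw [Sym2.map_pair_eq]
  have h1 : (G.induce {v}ᶜ).edgeSet.ncard = {e ∈ G.edgeSet | v ∉ e}.ncard := by
    rw [← himg, Set.ncard_image_of_injective _ hinj]
  have hsplit : G.edgeSet = {e ∈ G.edgeSet | v ∉ e} ∪ G.incidenceSet v := by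
    ext e
    simp only [Set.mem_union, Set.mem_setOf_eq, incidenceSet, Set.mem_sep_iff]
    tauto
  have hdisj : Disjoint {e ∈ G.edgeSet | v ∉ e} (G.incidenceSet v) := by
    rw [Set.disjoint_left]
    rintro e ⟨_, hvn⟩ hi
    exact hvn hi.2
  have hinc : (G.incidenceSet v).ncard = (G.neighborSet v).ncard := by
    rw [Set.ncard_eq_toFinset_card', Set.ncard_eq_toFinset_card', Set.toFinset_card,
      Set.toFinset_card, Fintype.card_congr (G.incidenceSetEquivNeighborSet v)]
  rw [hsplit, Set.ncard_union_eq hdisj (Set.toFinite _) (Set.toFinite _), h1, hinc]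

lemma neighbor_pos [Fintype V] (G : SimpleGraph V) (hG : G.Connected)
    (h2 : 1 < Fintype.card V) (v : V) : 0 < (G.neighborSet v).ncard := by
  classical
  obtain ⟨w, hw⟩ := Fintype.exists_ne_of_one_lt_card h2 v
  obtain ⟨p⟩ := hG v w
  cases p with
  | nil => exact absurd rfl hw
  | cons h q =>
    have : (G.neighborSet v).Nonempty := ⟨_, h⟩
    rwa [← Set.ncard_pos (Set.toFinite _)] at this

lemma exists_noncut [Fintype V] [DecidableEq V] (G : SimpleGraph V) (hG : G.Connected)
    (h2 : 1 < Fintype.card V) : ∃ v : V, (G.induce {v}ᶜ).Connected := by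
  classical
  obtain ⟨u0⟩ := hG.nonempty
  obtain ⟨v, -, hv⟩ := Finset.exists_max_image Finset.univ (G.dist u0) ⟨u0, Finset.mem_univ u0⟩
  have hvu : u0 ≠ v := by
    rintro rfl
    obtain ⟨w, hw⟩ := Fintype.exists_ne_of_one_lt_card h2 u0
    have hpos := hG.pos_dist_of_ne (Ne.symm hw)
    have := hv w (Finset.mem_univ w)
    rw [SimpleGraph.dist_self] at this
    omega
  refine ⟨v, ?_⟩
  apply G.induce_connected_of_patches u0 (by simp [hvu])
  intro w hw
  have hwv : w ≠ v := by simpa using hw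
  obtain ⟨p, hp⟩ := (hG u0 w).exists_walk_length_eq_dist
  have hvp : v ∉ p.support := by
    intro hvs
    have ht : G.dist u0 v ≤ (p.takeUntil v hvs).length := SimpleGraph.dist_le _
    have hd : G.dist v w ≤ (p.dropUntil v hvs).length := SimpleGraph.dist_le _
    have hlen : (p.takeUntil v hvs).length + (p.dropUntil v hvs).length = p.length := by
      rw [← Walk.length_append, Walk.take_spec]
    have hmax := hv w (Finset.mem_univ w)
    have hzero : (p.dropUntil v hvs).length = 0 := by omega
    exact hwv (Walk.eq_of_length_eq_zero hzero).symm
  refine ⟨{x | x ∈ p.support}, fun x hx => ?_, p.start_mem_support, p.end_mem_support, ?_⟩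
  · simp only [Set.mem_compl_iff, Set.mem_singleton_iff]
    rintro rfl
    exact hvp hx
  · have hc : (G.induce {x | x ∈ p.support}).Connected := by
      rw [connected_induce_iff]
      exact Subgraph.Connected.mono p.toSubgraph_le_induce_support
        (by rw [p.verts_toSubgraph]; rfl) p.toSubgraph_connected
    exact hc _ _

end Helpers

lemma key (n : ℕ) : ∀ {V : Type u} [Fintype V] [DecidableEq V] (G : SimpleGraph V),
    Fintype.card V = n → G.Connected →
    chi G * (chi G - 1) / 2 + (Fintype.card V - chi G) ≤ G.edgeSet.ncard := by
  induction n using Nat.strong_induction_on with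
  | _ n IH =>
  intro V _ _ G hn hG
  have hne : Nonempty V := hG.nonempty
  have hk1 : 1 ≤ chi G := chi_pos G
  have hkn : chi G ≤ Fintype.card V := chi_le G.colorable_of_fintype
  rcases le_or_gt (Fintype.card V) 1 with h1 | h2
  · have hc1 : Fintype.card V = 1 := le_antisymm h1 Fintype.card_pos
    have hk : chi G = 1 := le_antisymm (hkn.trans h1) hk1
    simp [hk, hc1]
  · obtain ⟨v, hvconn⟩ := exists_noncut G hG h2
    have hcard' : Fintype.card ({v}ᶜ : Set V) = Fintype.card V - 1 := by
      rw [Fintype.card_compl_set]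
      simp
    have hdeg : 0 < (G.neighborSet v).ncard := neighbor_pos G hG h2 v
    have hedge := edge_count G v
    have hle1 : chi (G.induce {v}ᶜ) ≤ chi G := chi_induce_le G _
    have hle2 : chi G ≤ chi (G.induce {v}ᶜ) + 1 :=
      chi_le (colorable_succ G v (chi_colorable _))
    have hkey' := IH (n - 1) (by omega) (G.induce {v}ᶜ) (by rw [hcard', hn]) hvconn
    have hk'card : chi (G.induce {v}ᶜ) ≤ Fintype.card V - 1 :=
      (chi_le (G.induce {v}ᶜ).colorable_of_fintype).trans (le_of_eq hcard')
    rw [hcard'] at hkey'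
    rcases eq_or_lt_of_le hle1 with heqc | hlt
    · rw [heqc] at hkey'
      set A := chi G * (chi G - 1) / 2 with hA
      omega
    · have hkk : chi G = chi (G.induce {v}ᶜ) + 1 := by omega
      have hdeg2 : chi (G.induce {v}ᶜ) ≤ (G.neighborSet v).ncard := by
        by_contra hcon
        push_neg at hcon
        have := chi_le (colorable_of_deleteVertex G v (chi_colorable _) hcon)
        omega
      have harith : chi G * (chi G - 1) / 2
          = chi (G.induce {v}ᶜ) * (chi (G.induce {v}ᶜ) - 1) / 2 + chi (G.induce {v}ᶜ) := by
        rw [hkk, ← Nat.choose_two_right, ← Nat.choose_two_right, Nat.choose_succ_succ,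
          Nat.choose_one_right, Nat.add_comm]
      rw [harith]
      set A := chi (G.induce {v}ᶜ) * (chi (G.induce {v}ᶜ) - 1) / 2 with hA
      omega

theorem stmt1 {V : Type*} [Fintype V] [DecidableEq V] (G : SimpleGraph V) (v : V)
    (hG : G.Connected) (hGv : (G.induce {v}ᶜ).Connected)
    (hchi : chi G = chi (G.induce {v}ᶜ))
    (heq : chi G * (chi G - 1) / 2 + Fintype.card V - chi G = G.edgeSet.ncard) :
    (G.neighborSet v).ncard = 1 ∧
      chi (G.induce {v}ᶜ) * (chi (G.induce {v}ᶜ) - 1) / 2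
        + Fintype.card ({v}ᶜ : Set V) - chi (G.induce {v}ᶜ)
        = (G.induce {v}ᶜ).edgeSet.ncard := by
  classical
  haveI hne : Nonempty V := hG.nonempty
  have h2 : 1 < Fintype.card V := by
    obtain ⟨⟨w, hw⟩⟩ := hGv.nonempty
    have hwv : w ≠ v := by simpa using hw
    exact Fintype.one_lt_card_iff.mpr ⟨w, v, hwv⟩
  have hcard' : Fintype.card ({v}ᶜ : Set V) = Fintype.card V - 1 := by
    rw [Fintype.card_compl_set]
    simp
  have hedge := edge_count G v
  have hdeg := neighbor_pos G hG h2 v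
  have hkey := key (Fintype.card ({v}ᶜ : Set V)) (G.induce {v}ᶜ) rfl hGv
  have hk1 : 1 ≤ chi G := chi_pos G
  have hkc : chi (G.induce {v}ᶜ) ≤ Fintype.card ({v}ᶜ : Set V) :=
    chi_le (G.induce {v}ᶜ).colorable_of_fintype
  rw [← hchi] at hkey hkc ⊢
  set A := chi G * (chi G - 1) / 2 with hA
  constructor <;> omega
end
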